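/- arXiv:1904.03886 — 5 statements merged into one kernel-verified Lean document; each statement's English description precedes it below -/
import Mathlib

section
/- Let χ be an n×n integer matrix such that χ, viewed over ℝ, is diagonalizable with all real eigenvalues contained in the interval [0,1]. Then χ is idempotent, i.e. χ² = χ. -/
/-!
Write `χ = P D P⁻¹` over `ℝ` with `D = diag(d)`. The integers `tr χᵏ = ∑ᵢ dᵢᵏ` form a
non-increasing sequence bounded below by `0`, so `tr χᵏ⁺¹ = tr χᵏ` for some `k`. Since each
summand `dᵢᵏ - dᵢᵏ⁺¹` is nonnegative, all of them vanish, i.e. every `dᵢ` is `0` or `1`.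
Hence `D² = D` and therefore `χ² = χ`.
-/

theorem mul_self_eq_self_of_pow_succ_eq {M : Type*} [MonoidWithZero M] [IsCancelMulZero M]
    {x : M} {k : ℕ} (h : x ^ (k + 1) = x ^ k) : x * x = x := by
  rcases eq_or_ne x 0 with rfl | hx
  · rw [mul_zero]
  · rw [pow_succ, ← mul_one (x ^ k), mul_assoc, one_mul] at h
    rw [mul_left_cancel₀ (pow_ne_zero k hx) h, one_mul]

theorem Int.exists_apply_succ_eq_of_antitone {f : ℕ → ℤ} (hf : Antitone f)
    (hb : BddBelow (Set.range f)) : ∃ k, f (k + 1) = f k := by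
  by_contra! hne
  obtain ⟨b, hb⟩ := hb
  have hanti : StrictAnti f :=
    strictAnti_nat_of_succ_lt fun k => (hf k.le_succ).lt_of_ne (hne k)
  refine Set.infinite_range_of_injective hanti.injective ((Set.finite_Icc b (f 0)).subset ?_)
  rintro _ ⟨k, rfl⟩
  exact ⟨hb ⟨k, rfl⟩, hf k.zero_le⟩

theorem Matrix.trace_pow_units_conj_diagonal {n R : Type*} [Fintype n] [DecidableEq n]
    [CommRing R] (u : (Matrix n n R)ˣ) (d : n → R) (k : ℕ) :
    ((u * diagonal d * u⁻¹ : Matrix n n R) ^ k).trace = ∑ i, d i ^ k := by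
  rw [Units.conj_pow, trace_units_conj, diagonal_pow, trace_diagonal]
  rfl

theorem mul_self_eq_self_of_sum_pow_succ_eq {ι : Type*} [Fintype ι] {d : ι → ℝ}
    (hd : ∀ i, d i ∈ Set.Icc (0 : ℝ) 1) {k : ℕ}
    (h : ∑ i, d i ^ (k + 1) = ∑ i, d i ^ k) (i : ι) : d i * d i = d i := by
  have hle : ∀ i ∈ Finset.univ, d i ^ (k + 1) ≤ d i ^ k := fun i _ =>
    pow_le_pow_of_le_one (hd i).1 (hd i).2 k.le_succ
  exact mul_self_eq_self_of_pow_succ_eq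
    ((Finset.sum_eq_sum_iff_of_le hle).mp h i (Finset.mem_univ i))

/-- An integer square matrix which, viewed over `ℝ`, is diagonalizable with all (real)
eigenvalues in the interval `[0,1]`, is idempotent. -/
theorem stmt1 (n : ℕ) (χ : Matrix (Fin n) (Fin n) ℤ)
    (P : Matrix (Fin n) (Fin n) ℝ) (d : Fin n → ℝ)
    (hP : IsUnit P.det)
    (hdiag : χ.map (Int.cast : ℤ → ℝ) = P * Matrix.diagonal d * P⁻¹)
    (hd : ∀ i, d i ∈ Set.Icc (0 : ℝ) 1) :
    χ * χ = χ := by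
  obtain ⟨u, rfl⟩ := (Matrix.isUnit_iff_isUnit_det P).mpr hP
  rw [← Matrix.coe_units_inv] at hdiag
  have htrace (k : ℕ) : (((χ ^ k).trace : ℤ) : ℝ) = ∑ i, d i ^ k := by
    rw [← eq_intCast (Int.castRingHom ℝ), AddMonoidHom.map_trace, Matrix.map_pow,
      Int.coe_castRingHom, hdiag, Matrix.trace_pow_units_conj_diagonal]
  have hanti : Antitone fun k => (χ ^ k).trace := antitone_nat_of_succ_le fun k => by
    rw [← Int.cast_le (R := ℝ), htrace, htrace]
    exact Finset.sum_le_sum fun i _ => pow_le_pow_of_le_one (hd i).1 (hd i).2 k.le_succ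
  have hbdd : BddBelow (Set.range fun k => (χ ^ k).trace) := ⟨0, by
    rintro _ ⟨k, rfl⟩
    have h : (0 : ℝ) ≤ (χ ^ k).trace :=
      htrace k ▸ Finset.sum_nonneg fun i _ => pow_nonneg (hd i).1 k
    exact_mod_cast h⟩
  obtain ⟨k, hk⟩ := Int.exists_apply_succ_eq_of_antitone hanti hbdd
  have hdd : d * d = d := funext <| mul_self_eq_self_of_sum_pow_succ_eq hd <| by
    rw [← htrace, ← htrace, hk]
  apply Matrix.map_injective (f := Int.castRingHom ℝ) Int.cast_injective
  dsimp only
  rw [Matrix.map_mul, Int.coe_castRingHom, hdiag, ← sq, Units.conj_pow, Matrix.diagonal_pow, sq,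
    hdd]
end

section
/- Let G be a group acting on a module T such that for every g ∈ G, (g − 1)² = 0 on T, where T is torsion-free. If G is abelian, then the restriction map H¹(G,T') → H¹(G,T) induced by an injection of G-modules T' ↪ T with T/T' torsion-free has kernel contained in the image of Hom(G, T'^G), where T'^G denotes the G-invariants. -/
/-!
Write `δ_g = g - 1`, so `δ_g² = 0` for all `g`. Since `G` is abelian, expanding
`δ_{σg} = δ_σ + δ_g + δ_σ δ_g` and squaring gives `0 = δ_{σg}² = 2 δ_σ δ_g`, hence `δ_σ δ_g = 0`
on the torsion-free `T`. A coboundary `g ↦ δ_g t` therefore takes `G`-invariant values, and a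
cocycle with invariant values is a homomorphism.
-/

section

variable {G T : Type*} [AddCommGroup T]

theorem smul_smul_eq_of_smul_sub_eq [Monoid G] [DistribMulAction G T] {g : G} {x : T}
    (h : g • (g • x - x) = g • x - x) : g • g • x = (2 : ℤ) • g • x - x := by
  rw [smul_sub] at h
  generalize g • g • x = z at h ⊢
  generalize g • x = y at h ⊢
  linear_combination (norm := module) h

theorem smul_smul_sub_eq_smul_sub [CommMonoid G] [DistribMulAction G T]
    (hunip : ∀ (g : G) (x : T), g • (g • x - x) = g • x - x)
    (htf : ∀ x : T, (2 : ℤ) • x = 0 → x = 0) (σ g : G) (x : T) :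
    σ • (g • x - x) = g • x - x := by
  have hsq (h : G) (y : T) : h • h • y = (2 : ℤ) • h • y - y :=
    smul_smul_eq_of_smul_sub_eq (hunip h y)
  have expand :
      (2 : ℤ) • σ • g • x - x = (2 : ℤ) • ((2 : ℤ) • σ • g • x - g • x) - ((2 : ℤ) • σ • x - x) :=
    calc (2 : ℤ) • σ • g • x - x = (σ * g) • (σ * g) • x := by rw [hsq, mul_smul]
      _ = σ • σ • g • g • x := by rw [mul_smul, mul_smul, smul_comm g σ]
      _ = (2 : ℤ) • σ • σ • g • x - σ • σ • x := by
        rw [hsq g, smul_sub, smul_sub, smul_comm σ (2 : ℤ), smul_comm σ (2 : ℤ)]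
      _ = _ := by rw [hsq, hsq]
  refine sub_eq_zero.mp (htf _ ?_)
  simp only [smul_sub]
  generalize σ • g • x = a at expand ⊢
  generalize σ • x = b at expand ⊢
  generalize g • x = c at expand ⊢
  linear_combination (norm := module) -expand

end

theorem stmt4_general (G : Type) [CommGroup G] (T : Type) [AddCommGroup T]
    [DistribMulAction G T]
    (htf : ∀ (n : ℤ) (x : T), n • x = 0 → n = 0 ∨ x = 0)
    (T' : AddSubgroup T)
    (huni : ∀ (g : G) (x : T), g • (g • x - x) = g • x - x)
    (f : G → T')
    (hcocycle : ∀ g h : G, ((f (g * h) : T)) = (f g : T) + g • (f h : T))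
    (hcobound : ∃ t : T, ∀ g : G, (f g : T) = g • t - t) :
    (∀ g σ : G, σ • (f g : T) = (f g : T)) ∧
    (∀ g h : G, ((f (g * h) : T)) = (f g : T) + (f h : T)) := by
  obtain ⟨t, ht⟩ := hcobound
  have htf₂ (x : T) (hx : (2 : ℤ) • x = 0) : x = 0 := (htf 2 x hx).resolve_left two_ne_zero
  have hinv (g σ : G) : σ • (f g : T) = f g := by
    rw [ht g, smul_smul_sub_eq_smul_sub huni htf₂]
  exact ⟨hinv, fun g h => by rw [hcocycle, hinv]⟩

/-- Let an abelian group `G` act on a torsion-free abelian group `T` with `(g−1)² = 0` on `T`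
for all `g`, and let `T' ⊆ T` be a `G`-stable subgroup with `T/T'` torsion-free.  Any
`1`-cocycle `f : G → T'` whose image in `Z¹(G,T)` is a coboundary takes values in the
`G`-invariants `T'^G` and is a group homomorphism; i.e. the kernel of
`H¹(G,T') → H¹(G,T)` is contained in the image of `Hom(G, T'^G)`. -/
theorem stmt4 (G : Type) [CommGroup G] (T : Type) [AddCommGroup T]
    [DistribMulAction G T]
    (htf : ∀ (n : ℤ) (x : T), n • x = 0 → n = 0 ∨ x = 0)
    (T' : AddSubgroup T)
    (hstable : ∀ (g : G), ∀ x ∈ T', g • x ∈ T')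
    (hquot : ∀ (n : ℤ), n ≠ 0 → ∀ x : T, n • x ∈ T' → x ∈ T')
    (huni : ∀ (g : G) (x : T), g • (g • x - x) = g • x - x)
    (f : G → T')
    (hcocycle : ∀ g h : G, ((f (g * h) : T)) = (f g : T) + g • (f h : T))
    (hcobound : ∃ t : T, ∀ g : G, (f g : T) = g • t - t) :
    (∀ g σ : G, σ • (f g : T) = (f g : T)) ∧
    (∀ g h : G, ((f (g * h) : T)) = (f g : T) + (f h : T)) :=
  stmt4_general G T htf T' huni f hcocycle hcobound
end

section
/- Let T be a free finitely generated ℤₗ-module with a continuous action of G = I₁ ⊕ ⋯ ⊕ Iₙ where each Iᵢ ≅ ℤₗ, acting unipotently of level 2 (i.e. (g−1)² = 0 for all g ∈ G). Suppose the natural map α : T/T^G → ⊕ᵢ T/T^{Iᵢ} is an isomorphism. Then setting Vᵢ = α⁻¹(T/T^{Iᵢ}), each Vᵢ is G-invariant, Iⱼ acts trivially on Vᵢ for j ≠ i, and T/T^G = V₁ ⊕ ⋯ ⊕ Vₙ. -/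
/-!
Write `Kᵢ = T^{Iᵢ}`, so that `T^G = ⋂ Kᵢ` and `Wᵢ = ⋂_{j ≠ i} Kⱼ`. Invariance of `Wᵢ` under `G`
comes from commutativity of `G`, and `Iⱼ` fixes `Wᵢ ⊆ Kⱼ` pointwise. The decomposition is a
Chinese remainder argument for the submodules `Kᵢ`: surjectivity of `T → ∏ᵢ T/Kᵢ` gives, for each
`t`, elements `wᵢ ≡ t mod Kᵢ` lying in every `Kⱼ` with `j ≠ i`, so `t - ∑ wᵢ ∈ ⋂ Kᵢ`. The sum is
direct because `Wⱼ ⊆ Kᵢ` for `j ≠ i`: an element of `Wᵢ` congruent modulo `T^G` to a sum of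
such elements lies in `Kᵢ` as well, hence in `T^G`.
-/

namespace LinearMap

variable {R M : Type*} [Semiring R] [AddCommGroup M] [Module R M]

lemma mem_ker_sub_id {f : M →ₗ[R] M} {x : M} : x ∈ ker (f - id) ↔ f x = x := by
  simp [sub_eq_zero]

lemma mem_ker_sub_id_of_commute {f g : M →ₗ[R] M} (h : Commute f g) {x : M}
    (hx : x ∈ ker (g - id)) : f x ∈ ker (g - id) := by
  rw [mem_ker_sub_id] at hx ⊢
  rw [← Module.End.mul_apply, ← h.eq, Module.End.mul_apply, hx]

end LinearMap

namespace Submodule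

variable {R M ι : Type*} [Ring R] [AddCommGroup M] [Module R M]

lemma mem_iInf_ne {K : ι → Submodule R M} {i : ι} {x : M} :
    x ∈ ⨅ j, ⨅ (_ : j ≠ i), K j ↔ ∀ j ≠ i, x ∈ K j := by
  simp only [mem_iInf]

variable (K : ι → Submodule R M)

theorem iInf_sup_iSup_iInf_ne_eq_top [Finite ι]
    (hK : Function.Surjective (LinearMap.pi fun i => (K i).mkQ)) :
    (⨅ i, K i) ⊔ ⨆ i, ⨅ j, ⨅ (_ : j ≠ i), K j = ⊤ := by
  classical
  cases nonempty_fintype ι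
  refine eq_top_iff.2 fun t _ => ?_
  choose w hw using fun i => hK (Pi.single i ((K i).mkQ t))
  have hwK : ∀ i j, j ≠ i → w i ∈ K j := fun i j hj => by
    simpa [Pi.single_eq_of_ne hj] using congr_fun (hw i) j
  have hwt : ∀ i, w i - t ∈ K i := fun i => by
    simpa [Quotient.eq] using congr_fun (hw i) i
  have hrest : t - ∑ i, w i ∈ ⨅ i, K i := by
    refine mem_iInf _ |>.2 fun k => ?_
    have hk := sub_mem (neg_mem (hwt k))
      (sum_mem (t := Finset.univ.erase k) fun i hi => hwK i k (Finset.ne_of_mem_erase hi).symm)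
    rwa [neg_sub, sub_sub, Finset.add_sum_erase _ _ (Finset.mem_univ k)] at hk
  have hsum : ∑ i, w i ∈ ⨆ i, ⨅ j, ⨅ (_ : j ≠ i), K j :=
    sum_mem fun i _ => mem_iSup_of_mem i (mem_iInf_ne.2 (hwK i))
  exact mem_sup.2 ⟨_, hrest, _, hsum, sub_add_cancel _ _⟩

theorem iSup_map_mkQ_iInf_ne_eq_top [Finite ι]
    (hK : Function.Surjective (LinearMap.pi fun i => (K i).mkQ)) :
    ⨆ i, (⨅ j, ⨅ (_ : j ≠ i), K j).map (⨅ i, K i).mkQ = ⊤ := by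
  rw [← map_iSup, map_mkQ_eq_top]
  exact iInf_sup_iSup_iInf_ne_eq_top K hK

theorem iSupIndep_map_mkQ_iInf_ne :
    iSupIndep fun i => (⨅ j, ⨅ (_ : j ≠ i), K j).map (⨅ i, K i).mkQ := by
  intro i
  rw [disjoint_def]
  rintro _ ⟨x, hx, rfl⟩ hy
  rw [iSup_congr fun j => (map_iSup _ _).symm, ← map_iSup] at hy
  obtain ⟨y, hy, hyx⟩ := hy
  have hle : ⨆ j, ⨆ (_ : j ≠ i), ⨅ k, ⨅ (_ : k ≠ j), K k ≤ K i :=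
    iSup₂_le fun j hj _ hz => mem_iInf_ne.1 hz i (Ne.symm hj)
  have hyi : y ∈ K i := hle hy
  have hxi : x ∈ K i := by
    have hxy : x - y ∈ ⨅ i, K i := (Quotient.eq _).1 hyx.symm
    simpa using add_mem ((mem_iInf _).1 hxy i) hyi
  rw [mkQ_apply, Quotient.mk_eq_zero, mem_iInf]
  intro k
  by_cases hk : k = i
  · exact hk ▸ hxi
  · exact mem_iInf_ne.1 hx k hk

end Submodule

theorem stmt5_general (l : ℕ) [Fact l.Prime] (T : Type) [AddCommGroup T] [Module ℤ_[l] T]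
    (n : ℕ) (σ : Fin n → (T ≃ₗ[ℤ_[l]] T))
    (hcomm : ∀ i j, σ i * σ j = σ j * σ i)
    (TG : Submodule ℤ_[l] T)
    (hTG : TG = ⨅ i, LinearMap.ker ((σ i).toLinearMap - LinearMap.id))
    -- `α` is an isomorphism: the map `T → ⊕ᵢ T/T^{Iᵢ}`, whose kernel is `T^G`, is surjective
    (hα : Function.Surjective
      (LinearMap.pi
        (fun i => (LinearMap.ker ((σ i).toLinearMap - LinearMap.id)).mkQ)))
    (W : Fin n → Submodule ℤ_[l] T)
    (hW : ∀ i, W i = ⨅ j, ⨅ (_ : j ≠ i),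
      LinearMap.ker ((σ j).toLinearMap - LinearMap.id)) :
    (∀ (i k : Fin n), ∀ x ∈ W i, σ k x ∈ W i) ∧
    (∀ (i j : Fin n), j ≠ i → ∀ x ∈ W i, σ j x - x ∈ TG) ∧
    (⨆ i, (W i).map TG.mkQ) = ⊤ ∧
    iSupIndep (fun i => (W i).map TG.mkQ) := by
  subst hTG
  obtain rfl : W = _ := funext hW
  refine ⟨fun i k x hx => ?_, fun i j hj x hx => ?_, Submodule.iSup_map_mkQ_iInf_ne_eq_top _ hα,
    Submodule.iSupIndep_map_mkQ_iInf_ne _⟩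
  · have hσ : ∀ j, Commute (σ k).toLinearMap (σ j).toLinearMap := fun j =>
      LinearMap.ext fun y => DFunLike.congr_fun (hcomm k j) y
    exact Submodule.mem_iInf_ne.2 fun j hj =>
      LinearMap.mem_ker_sub_id_of_commute (hσ j) (Submodule.mem_iInf_ne.1 hx j hj)
  · rw [show σ j x - x = 0 from Submodule.mem_iInf_ne.1 hx j hj]
    exact zero_mem _

/-- Let `T` be a free finitely generated `ℤₗ`-module with a (continuous) action of
`G = I₁ ⊕ ⋯ ⊕ Iₙ`, each `Iᵢ ≅ ℤₗ` with topological generator `σ i`, acting unipotently of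
level 2.  If the natural map `α : T/T^G → ⊕ᵢ T/T^{Iᵢ}` is an isomorphism, then the
submodules `Vᵢ = α⁻¹(T/T^{Iᵢ})` (realized by their preimages `Wᵢ` in `T`) are `G`-invariant,
`Iⱼ` acts trivially on `Vᵢ` for `j ≠ i`, and `T/T^G = V₁ ⊕ ⋯ ⊕ Vₙ`. -/
theorem stmt5 (l : ℕ) [Fact l.Prime] (T : Type) [AddCommGroup T] [Module ℤ_[l] T]
    [Module.Free ℤ_[l] T] [Module.Finite ℤ_[l] T]
    (n : ℕ) (σ : Fin n → (T ≃ₗ[ℤ_[l]] T))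
    (hcomm : ∀ i j, σ i * σ j = σ j * σ i)
    (huni : ∀ (i : Fin n) (x : T), σ i (σ i x - x) = σ i x - x)
    (TG : Submodule ℤ_[l] T)
    (hTG : TG = ⨅ i, LinearMap.ker ((σ i).toLinearMap - LinearMap.id))
    -- `α` is an isomorphism: the map `T → ⊕ᵢ T/T^{Iᵢ}`, whose kernel is `T^G`, is surjective
    (hα : Function.Surjective
      (LinearMap.pi
        (fun i => (LinearMap.ker ((σ i).toLinearMap - LinearMap.id)).mkQ)))
    (W : Fin n → Submodule ℤ_[l] T)
    (hW : ∀ i, W i = ⨅ j, ⨅ (_ : j ≠ i),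
      LinearMap.ker ((σ j).toLinearMap - LinearMap.id)) :
    (∀ (i k : Fin n), ∀ x ∈ W i, σ k x ∈ W i) ∧
    (∀ (i j : Fin n), j ≠ i → ∀ x ∈ W i, σ j x - x ∈ TG) ∧
    (⨆ i, (W i).map TG.mkQ) = ⊤ ∧
    iSupIndep (fun i => (W i).map TG.mkQ) :=
  stmt5_general l T n σ hcomm TG hTG hα W hW
end

section
/- Let T be a module over a commutative ring with commuting submodule-actions of subgroups I₁,…,Iₙ generating an abelian group G. If T = Σᵢ T^{⊕_{j≠i} Iⱼ} (each summand being the invariants under all Iⱼ with j ≠ i), then the natural map T/T^G → ⊕ᵢ T/T^{Iᵢ} is surjective. -/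
/-- Let a group `G`, generated by subgroups `I₁,…,Iₙ`, act linearly on a module `T` over a
commutative ring.  If `T = Σᵢ T^{⊕_{j≠i} Iⱼ}` (each summand the invariants under all `Iⱼ`,
`j ≠ i`), then the natural map `T/T^G → ⊕ᵢ T/T^{Iᵢ}` is surjective. -/
theorem stmt6 (R : Type) [CommRing R] (T : Type) [AddCommGroup T] [Module R T]
    (G : Type) [CommGroup G] (n : ℕ) (I : Fin n → Subgroup G)
    (hgen : (⨆ i, I i) = ⊤)
    (ρ : G →* (T ≃ₗ[R] T))
    (hsum : (⨆ i, ⨅ j, ⨅ (_ : j ≠ i), ⨅ g ∈ I j,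
        LinearMap.ker ((ρ g).toLinearMap - LinearMap.id)) = ⊤) :
    Function.Surjective
      (LinearMap.pi (fun i => (⨅ g ∈ I i,
        LinearMap.ker ((ρ g).toLinearMap - LinearMap.id)).mkQ)) := by
  set N : Fin n → Submodule R T := fun i =>
    ⨅ g ∈ I i, LinearMap.ker ((ρ g).toLinearMap - LinearMap.id) with hN
  set F : T →ₗ[R] ((i : Fin n) → T ⧸ N i) := LinearMap.pi (fun i => (N i).mkQ) with hF
  intro y
  suffices h : y ∈ LinearMap.range F by exact h
  have hy : y = ∑ i, Pi.single i (y i) := (Finset.univ_sum_single y).symm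
  rw [hy]
  refine Submodule.sum_mem _ fun i _ => ?_
  obtain ⟨t, ht⟩ := (N i).mkQ_surjective (y i)
  rw [← ht]
  have htop : t ∈ ⨆ k, ⨅ j, ⨅ (_ : j ≠ k), N j := by
    rw [hN]; rw [hsum]; trivial
  refine Submodule.iSup_induction (motive := fun t => Pi.single i ((N i).mkQ t) ∈ LinearMap.range F)
    _ htop ?_ ?_ ?_
  · intro k s hs
    by_cases hk : k = i
    · subst hk
      refine ⟨s, ?_⟩
      funext j
      by_cases hj : j = k
      · subst hj; simp [hF]
      · have hsj : s ∈ N j := by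
          have := (Submodule.mem_iInf _).mp hs j
          exact (Submodule.mem_iInf _).mp this hj
        have : (N j).mkQ s = 0 := by
          rwa [Submodule.mkQ_apply, Submodule.Quotient.mk_eq_zero]
        simp [hF, Pi.single_eq_of_ne hj, this]
    · have hsi : s ∈ N i := by
        have := (Submodule.mem_iInf _).mp hs i
        exact (Submodule.mem_iInf _).mp this (Ne.symm hk)
      have : (N i).mkQ s = 0 := by
        rwa [Submodule.mkQ_apply, Submodule.Quotient.mk_eq_zero]
      rw [this]
      simp
  · simp
  · intro a b ha hb
    have : (Pi.single i ((N i).mkQ (a + b)) : (j : Fin n) → T ⧸ N j) =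
        Pi.single i ((N i).mkQ a) + Pi.single i ((N i).mkQ b) := by
      rw [map_add, Pi.single_add]
    rw [this]
    exact Submodule.add_mem _ ha hb
end

section
/- Let X, X', Y, Y' be free finitely generated abelian groups, p : X → Y and p' : X' → Y' injective group homomorphisms. Suppose there exist homomorphisms λ : X → X', λ' : X' → X, μ : Y → Y', μ' : Y' → Y with μ ∘ p = p' ∘ λ and μ' ∘ p' = p ∘ λ', such that λ' ∘ λ = δ·id_X and μ' ∘ μ = δ·id_Y for a positive integer δ, and μ, μ' are injective with finite cokernels. If p is an isomorphism and rank X = rank X', rank Y = rank Y', then p' has finite cokernel of order dividing a power of δ; in particular if moreover δ = 1 then p' is an isomorphism. -/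
/-- Isogeny invariance: given injective maps `p : X → Y`, `p' : X' → Y'` of free finitely
generated abelian groups intertwined by maps `λ, λ', μ, μ'` with `λ'λ = δ·id`, `μ'μ = δ·id`
(`δ > 0`), `μ, μ'` injective with finite cokernels, if `p` is an isomorphism and the ranks
match, then `p'` has finite cokernel of order dividing a power of `δ`; if moreover `δ = 1`
then `p'` is an isomorphism. -/
theorem stmt10 (X X' Y Y' : Type)
    [AddCommGroup X] [Module ℤ X] [Module.Free ℤ X] [Module.Finite ℤ X]
    [AddCommGroup X'] [Module ℤ X'] [Module.Free ℤ X'] [Module.Finite ℤ X']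
    [AddCommGroup Y] [Module ℤ Y] [Module.Free ℤ Y] [Module.Finite ℤ Y]
    [AddCommGroup Y'] [Module ℤ Y'] [Module.Free ℤ Y'] [Module.Finite ℤ Y']
    (p : X →ₗ[ℤ] Y) (p' : X' →ₗ[ℤ] Y')
    (hp : Function.Injective p) (hp' : Function.Injective p')
    (lam : X →ₗ[ℤ] X') (lam' : X' →ₗ[ℤ] X)
    (mu : Y →ₗ[ℤ] Y') (mu' : Y' →ₗ[ℤ] Y)
    (δ : ℕ) (hδ : 0 < δ)
    (hcomm₁ : mu ∘ₗ p = p' ∘ₗ lam) (hcomm₂ : mu' ∘ₗ p' = p ∘ₗ lam')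
    (hlam : lam' ∘ₗ lam = (δ : ℤ) • LinearMap.id)
    (hmu : mu' ∘ₗ mu = (δ : ℤ) • LinearMap.id)
    (hmuinj : Function.Injective mu) (hmu'inj : Function.Injective mu')
    (hcoker₁ : Finite (Y' ⧸ LinearMap.range mu))
    (hcoker₂ : Finite (Y ⧸ LinearMap.range mu'))
    (hpbij : Function.Bijective p)
    (hrX : Module.finrank ℤ X = Module.finrank ℤ X')
    (hrY : Module.finrank ℤ Y = Module.finrank ℤ Y') :
    Finite (Y' ⧸ LinearMap.range p') ∧
    (∃ k : ℕ, Nat.card (Y' ⧸ LinearMap.range p') ∣ δ ^ k) ∧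
    (δ = 1 → Function.Bijective p') := by
  -- Step 1: μ ∘ μ' = δ • id on Y' (using injectivity of μ').
  have hmu2 : ∀ y' : Y', mu (mu' y') = δ • y' := by
    intro y'
    apply hmu'inj
    have h := LinearMap.congr_fun hmu (mu' y')
    simp only [LinearMap.coe_comp, Function.comp_apply, LinearMap.smul_apply,
      LinearMap.id_coe, id_eq] at h
    rw [h, map_nsmul]
    exact natCast_zsmul (mu' y') δ
  -- Step 2: δ • y' ∈ range p' for every y'.
  have hkey : ∀ y' : Y', δ • y' ∈ LinearMap.range p' := by
    intro y'
    obtain ⟨x, hx⟩ := hpbij.2 (mu' y')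
    refine ⟨lam x, ?_⟩
    have h := LinearMap.congr_fun hcomm₁ x
    simp only [LinearMap.coe_comp, Function.comp_apply] at h
    rw [← h, hx, hmu2]
  -- The quotient is killed by δ (with respect to the canonical ℕ-action).
  have hkill : ∀ q : Y' ⧸ LinearMap.range p', δ • q = 0 := by
    intro q
    obtain ⟨y', rfl⟩ := Submodule.Quotient.mk_surjective _ q
    have h1 : δ • (Submodule.Quotient.mk y' : Y' ⧸ LinearMap.range p')
        = Submodule.Quotient.mk (δ • y') := by
      have h2 := map_nsmul (LinearMap.range p').mkQ δ y'
      simpa [Submodule.mkQ_apply] using h2.symm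
    rw [h1, Submodule.Quotient.mk_eq_zero]
    exact hkey y'
  haveI hQfin : Module.Finite ℤ (Y' ⧸ LinearMap.range p') := by
    have h : @Module.Finite ℤ (Y' ⧸ LinearMap.range p') _ _ (Submodule.Quotient.module _) := by
      let _ : Module ℤ (Y' ⧸ LinearMap.range p') := Submodule.Quotient.module _
      exact Module.Finite.of_surjective (σ := RingHom.id ℤ) (LinearMap.range p').mkQ
        ((LinearMap.range p').mkQ_surjective)
    convert h
    · rfl
    · exact Subsingleton.elim _ _
  -- Finiteness: f.g. torsion ℤ-module.
  have hfin : Finite (Y' ⧸ LinearMap.range p') := by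
    apply Module.finite_of_fg_torsion
    intro q
    refine ⟨⟨(δ : ℤ), mem_nonZeroDivisors_of_ne_zero
      (Int.natCast_ne_zero.mpr hδ.ne')⟩, ?_⟩
    show (δ : ℤ) • q = 0
    rw [Nat.cast_smul_eq_nsmul ℤ]
    exact hkill q
  refine ⟨hfin, ?_, ?_⟩
  · haveI : AddGroup.FG (Y' ⧸ LinearMap.range p') :=
      Module.Finite.iff_addGroup_fg.mp hQfin
    exact ⟨AddGroup.rank (Y' ⧸ LinearMap.range p'),
      card_dvd_exponent_nsmul_rank' _ hkill⟩
  · intro hδ1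
    refine ⟨hp', fun y' => ?_⟩
    have h := hkey y'
    rw [hδ1, one_nsmul] at h
    exact h
end
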